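/- Let R be a Prüfer domain of finite Krull dimension. Then R is radically finite if and only if R is a Dedekind domain whose ideal class group is torsion (every element of the ideal class group has finite order). -/

import Mathlib

/-- The height of an ideal `I`: the infimum of the heights (in the prime spectrum)
of the prime ideals containing `I`. -/
noncomputable def idealHeight (R : Type*) [CommRing R] (I : Ideal R) : ℕ∞ :=
  ⨅ P : {P : PrimeSpectrum R // I ≤ P.asIdeal}, Order.height P.1

/-- An ideal `I` is radically perfect if its height equals the least number `n` such that
`√I` is the radical of an ideal generated by `n` elements, and moreover, if `ht I = 0`,
then `√I` is the radical of a principal ideal generated by a zero divisor. -/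
def RadicallyPerfect {R : Type*} [CommRing R] (I : Ideal R) : Prop :=
  idealHeight R I = sInf {n : ℕ∞ | ∃ s : Finset R,
      (s.card : ℕ∞) = n ∧ (Ideal.span (s : Set R)).radical = I.radical} ∧
    (idealHeight R I = 0 → ∃ θ : R, θ ∉ nonZeroDivisors R ∧
      I.radical = (Ideal.span {θ} : Ideal R).radical)

/-- The set of ideals of `R` generated by `ht P` elements whose radical equals `P`. -/
def genHtRad {R : Type*} [CommRing R] (P : Ideal R) : Set (Ideal R) :=
  {A | ∃ s : Finset R, (s.card : ℕ∞) = idealHeight R P ∧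
    Ideal.span (s : Set R) = A ∧ A.radical = P}

/-- A commutative ring `R` is radically finite if every prime ideal `P` of `R` is radically
perfect, the set of ideals generated by `ht P` elements with radical `P` has a maximal
member `A`, and every chain of ideals between `A` and `P` is finite. -/
def RadicallyFinite (R : Type*) [CommRing R] : Prop :=
  ∀ P : Ideal R, P.IsPrime → RadicallyPerfect P ∧
    ∃ A ∈ genHtRad P, (∀ B ∈ genHtRad P, A ≤ B → B = A) ∧
      ∀ C : Set (Ideal R), IsChain (· ≤ ·) C → C ⊆ Set.Icc A P → C.Finite

/-- A ring is of finite character if each nonzero element lies in only finitely many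
maximal ideals. -/
def FiniteCharacter (R : Type*) [CommRing R] : Prop :=
  ∀ x : R, x ≠ 0 → {M : Ideal R | M.IsMaximal ∧ x ∈ M}.Finite

/-- A Prüfer domain: every nonzero finitely generated ideal is invertible
(as a fractional ideal in the fraction field). -/
def IsPruferDomain (R : Type*) [CommRing R] [IsDomain R] : Prop :=
  ∀ I : Ideal R, I.FG → I ≠ ⊥ →
    IsUnit (I : FractionalIdeal (nonZeroDivisors R) (FractionRing R))

/-!
Radical finiteness makes every prime `P` finitely generated: chains in `[A, P]` are finite, so
there is a maximal finitely generated ideal between `A` and `P`, and it can only be `P`. By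
Cohen's theorem `R` is Noetherian, and a Noetherian Prüfer domain is Dedekind. In a Dedekind
domain a nonzero prime `P` has height one and the ideals with radical `P` are the powers `P ^ k`,
so `genHtRad P` consists of the principal powers of `P`. These exist iff the class of `P` has
finite order `d`, and then `P ^ d` is the maximal one. The classes of primes generate the class
group, which gives both directions.
-/

open scoped nonZeroDivisors

theorem exists_maximal_of_chains_finite {α : Type*} [PartialOrder α] {S : Set α}
    (hne : S.Nonempty) (hS : ∀ C ⊆ S, IsChain (· ≤ ·) C → C.Finite) :
    ∃ m, Maximal (· ∈ S) m := by
  refine zorn_le₀ S fun C hCS hC => ?_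
  rcases C.eq_empty_or_nonempty with rfl | hCne
  · obtain ⟨a, ha⟩ := hne
    exact ⟨a, ha, by simp⟩
  obtain ⟨m, hmC, hmax⟩ := (hS C hCS hC).exists_maximal hCne
  exact ⟨m, hCS hmC, fun z hz => (hC.total hz hmC).elim id fun hmz => hmax hz hmz⟩

section

variable {R : Type*} [CommRing R]

theorem idealHeight_eq_height (I : Ideal R) : idealHeight R I = I.height := by
  rw [Ideal.height_eq_inf_minimalPrimes, idealHeight]
  apply le_antisymm
  · refine le_iInf₂ fun J hJ => ?_
    let p : PrimeSpectrum R := ⟨J, hJ.1.1⟩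
    calc ⨅ Q : {Q : PrimeSpectrum R // I ≤ Q.asIdeal}, Order.height Q.1
        ≤ Order.height p := iInf_le (fun Q : {Q : PrimeSpectrum R // I ≤ Q.asIdeal} =>
          Order.height Q.1) ⟨p, hJ.1.2⟩
      _ = J.height := (PrimeSpectrum.height_eq_orderHeight p).symm
  · refine le_iInf fun Q => ?_
    obtain ⟨J, hJ, hJQ⟩ := Ideal.exists_minimalPrimes_le Q.2
    calc ⨅ J ∈ I.minimalPrimes, J.height ≤ J.height := iInf₂_le J hJ
      _ ≤ Q.1.asIdeal.height := Ideal.height_mono hJQ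
      _ = Order.height Q.1 := PrimeSpectrum.height_eq_orderHeight _

theorem Ideal.height_eq_one_of_ne_bot [IsDomain R] [Ring.KrullDimLE 1 R] {P : Ideal R}
    [P.IsPrime] (hP : P ≠ ⊥) : P.height = 1 := by
  have h0 : P.height ≠ 0 := mt Ideal.height_eq_zero_iff_eq_bot.mp hP
  refine le_antisymm ?_ (Order.one_le_iff_pos.mpr h0.bot_lt)
  have h := Ideal.height_le_ringKrullDim_of_ne_top (Ideal.IsPrime.ne_top ‹_›)
  exact_mod_cast h.trans (Ring.krullDimLE_iff.mp ‹_›)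

theorem Ideal.fg_of_chains_finite {A P : Ideal R} (hA : A.FG) (hAP : A ≤ P)
    (hchains : ∀ C : Set (Ideal R), IsChain (· ≤ ·) C → C ⊆ Set.Icc A P → C.Finite) :
    P.FG := by
  obtain ⟨M, ⟨hAM, hMP, hMfg⟩, hmax⟩ := exists_maximal_of_chains_finite
    (S := {J : Ideal R | A ≤ J ∧ J ≤ P ∧ J.FG}) ⟨A, le_rfl, hAP, hA⟩
    fun C hCS hC => hchains C hC fun J hJ => ⟨(hCS hJ).1, (hCS hJ).2.1⟩
  suffices M = P from this ▸ hMfg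
  refine hMP.antisymm fun x hxP => ?_
  have hMx : M ⊔ Ideal.span {x} ∈ {J : Ideal R | A ≤ J ∧ J ≤ P ∧ J.FG} :=
    ⟨hAM.trans le_sup_left, sup_le hMP (Ideal.span_singleton_le_iff_mem P |>.mpr hxP),
      Submodule.FG.sup hMfg (Submodule.fg_span_singleton x)⟩
  exact hmax hMx le_sup_left (Ideal.mem_sup_right (Ideal.mem_span_singleton_self x))

theorem RadicallyFinite.fg_of_isPrime (h : RadicallyFinite R) {P : Ideal R} (hP : P.IsPrime) :
    P.FG := by
  obtain ⟨-, A, ⟨s, -, hsA, hAP⟩, -, hchains⟩ := h P hP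
  exact Ideal.fg_of_chains_finite ⟨s, hsA⟩ (hAP ▸ Ideal.le_radical) hchains

theorem RadicallyFinite.isNoetherianRing (h : RadicallyFinite R) : IsNoetherianRing R :=
  .of_prime fun _ hP => h.fg_of_isPrime hP

theorem isDedekindDomain_of_isUnit_coeIdeal [IsDomain R]
    (h : ∀ I : Ideal R, I ≠ ⊥ → IsUnit (I : FractionalIdeal R⁰ (FractionRing R))) :
    IsDedekindDomain R := by
  refine (isDedekindDomain_iff_mul_inv_cancel (K := FractionRing R)).mpr fun I hI => ?_
  obtain ⟨a, J, ha, rfl⟩ := FractionalIdeal.exists_eq_spanSingleton_mul I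
  have hJ : J ≠ ⊥ := by
    rintro rfl
    simp at hI
  have ha' : (algebraMap R (FractionRing R) a)⁻¹ ≠ 0 := by simpa using ha
  rw [FractionalIdeal.mul_inv_cancel_iff_isUnit]
  exact (IsUnit.of_mul_eq_one _
    (FractionalIdeal.spanSingleton_mul_inv (FractionRing R) ha')).mul (h J hJ)

theorem IsPruferDomain.isDedekindDomain [IsDomain R] [IsNoetherianRing R]
    (hpr : IsPruferDomain R) : IsDedekindDomain R :=
  isDedekindDomain_of_isUnit_coeIdeal fun I hI => hpr I (IsNoetherian.noetherian I) hI

theorem ClassGroup.mk0_pow_eq_one_iff [IsDedekindDomain R] {I : Ideal R} (hI : I ∈ (Ideal R)⁰)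
    (k : ℕ) : ClassGroup.mk0 ⟨I, hI⟩ ^ k = 1 ↔ (I ^ k).IsPrincipal := by
  rw [← map_pow, ← ClassGroup.mk0_eq_one_iff (pow_mem hI k)]
  rfl

theorem ClassGroup.isMulTorsion_of_isOfFinOrder_mk0 [IsDedekindDomain R]
    (h : ∀ (P : Ideal R) (hP : P ∈ (Ideal R)⁰), P.IsPrime →
      IsOfFinOrder (ClassGroup.mk0 ⟨P, hP⟩)) :
    IsMulTorsion (ClassGroup R) := by
  rintro g
  obtain ⟨⟨I, hI⟩, rfl⟩ := ClassGroup.mk0_surjective g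
  induction I using UniqueFactorizationMonoid.induction_on_prime with
  | h₁ => exact absurd hI zero_notMem_nonZeroDivisors
  | h₂ u hu =>
    obtain rfl := Ideal.isUnit_iff.mp hu
    rw [(ClassGroup.mk0_eq_one_iff hI).mpr inferInstance]
    exact IsOfFinOrder.one
  | h₃ J P hJ hP ih =>
    have hP0 : P ∈ (Ideal R)⁰ := mem_nonZeroDivisors_of_ne_zero hP.ne_zero
    have hJ0 : J ∈ (Ideal R)⁰ := mem_nonZeroDivisors_of_ne_zero hJ
    rw [show (⟨P * J, hI⟩ : (Ideal R)⁰) = ⟨P, hP0⟩ * ⟨J, hJ0⟩ from rfl, map_mul]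
    exact (Commute.all _ _).isOfFinOrder_mul (h P hP0 (Ideal.isPrime_of_prime hP)) (ih hJ0)

theorem Ideal.exists_eq_pow_of_pow_le_of_le [IsDedekindDomain R] {P B : Ideal R}
    [hP : P.IsPrime] (hP0 : P ≠ ⊥) {d : ℕ} (hPB : P ^ d ≤ B) (hBP : B ≤ P) :
    ∃ k ∈ Set.Icc 1 d, B = P ^ k := by
  have hprime : Prime P := (Ideal.prime_iff_isPrime hP0).mpr hP
  obtain ⟨k, hkd, hB⟩ := (dvd_prime_pow hprime d).mp (Ideal.dvd_iff_le.mpr hPB)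
  rw [associated_iff_eq] at hB
  refine ⟨k, ⟨Nat.one_le_iff_ne_zero.mpr ?_, hkd⟩, hB⟩
  rintro rfl
  exact hP.ne_top (top_le_iff.mp (by simpa [hB] using hBP))

theorem Ideal.exists_eq_pow_of_radical_eq [IsDedekindDomain R] {P A : Ideal R} [P.IsPrime]
    (hP0 : P ≠ ⊥) (hA : A.radical = P) : ∃ k, 1 ≤ k ∧ A = P ^ k := by
  obtain ⟨n, hn⟩ := A.exists_radical_pow_le_of_fg (IsNoetherian.noetherian _)
  rw [hA] at hn
  obtain ⟨k, ⟨hk, -⟩, hAk⟩ := exists_eq_pow_of_pow_le_of_le hP0 hn (hA ▸ A.le_radical)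
  exact ⟨k, hk, hAk⟩

theorem Ideal.finite_Icc_pow [IsDedekindDomain R] {P : Ideal R} [P.IsPrime] (hP0 : P ≠ ⊥)
    (d : ℕ) : (Set.Icc (P ^ d) P).Finite := by
  refine ((Set.finite_Icc 1 d).image (P ^ ·)).subset fun B ⟨hPB, hBP⟩ => ?_
  obtain ⟨k, hk, rfl⟩ := exists_eq_pow_of_pow_le_of_le hP0 hPB hBP
  exact ⟨k, hk, rfl⟩

theorem mem_genHtRad_iff_of_idealHeight_eq_one {P A : Ideal R} (hP : idealHeight R P = 1) :
    A ∈ genHtRad P ↔ A.IsPrincipal ∧ A.radical = P := by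
  simp only [genHtRad, hP, Set.mem_ofPred_eq, Nat.cast_eq_one, Finset.card_eq_one]
  constructor
  · rintro ⟨s, ⟨θ, rfl⟩, rfl, hrad⟩
    exact ⟨⟨θ, by simp⟩, hrad⟩
  · rintro ⟨⟨θ, rfl⟩, hrad⟩
    exact ⟨{θ}, ⟨θ, rfl⟩, by simp, hrad⟩

theorem genHtRad_bot [Nontrivial R] [IsReduced R] : genHtRad (⊥ : Ideal R) = {⊥} := by
  ext A
  simp only [genHtRad, idealHeight_eq_height, Ideal.height_bot, Set.mem_ofPred_eq,
    Nat.cast_eq_zero, Finset.card_eq_zero, Set.mem_singleton_iff]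
  constructor
  · rintro ⟨s, rfl, rfl, -⟩
    simp
  · rintro rfl
    exact ⟨∅, rfl, by simp, Ideal.radical_bot_of_isReduced⟩

theorem radicallyPerfect_bot [Nontrivial R] : RadicallyPerfect (⊥ : Ideal R) := by
  have h0 : idealHeight R ⊥ = 0 := by rw [idealHeight_eq_height, Ideal.height_bot]
  refine ⟨?_, fun _ => ⟨0, zero_notMem_nonZeroDivisors, by simp⟩⟩
  rw [h0, eq_comm, ← nonpos_iff_eq_zero]
  exact sInf_le ⟨∅, by simp, by simp⟩

theorem radicallyPerfect_of_idealHeight_eq_one {I : Ideal R} (hI : idealHeight R I = 1)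
    (hIrad : I.radical ≠ (⊥ : Ideal R).radical) {θ : R}
    (hθ : (Ideal.span {θ}).radical = I.radical) : RadicallyPerfect I := by
  refine ⟨?_, fun h => absurd (hI.symm.trans h) one_ne_zero⟩
  rw [hI]
  refine le_antisymm (le_sInf fun n ⟨s, hsn, hs⟩ => ?_)
    (sInf_le ⟨{θ}, by simp, by simpa using hθ⟩)
  refine Order.one_le_iff_pos.mpr (pos_iff_ne_zero.mpr ?_)
  rintro rfl
  obtain rfl : s = ∅ := by simpa using hsn
  exact hIrad (by simpa using hs.symm)

theorem RadicallyFinite.isOfFinOrder_mk0 [IsDedekindDomain R] (h : RadicallyFinite R)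
    {P : Ideal R} (hP : P ∈ (Ideal R)⁰) (hPp : P.IsPrime) :
    IsOfFinOrder (ClassGroup.mk0 ⟨P, hP⟩) := by
  have hP0 : P ≠ ⊥ := mem_nonZeroDivisors_iff_ne_zero.mp hP
  have hht : idealHeight R P = 1 := (idealHeight_eq_height P).trans (P.height_eq_one_of_ne_bot hP0)
  obtain ⟨-, A, hA, -⟩ := h P hPp
  obtain ⟨hAprin, hArad⟩ := (mem_genHtRad_iff_of_idealHeight_eq_one hht).mp hA
  obtain ⟨k, hk, rfl⟩ := Ideal.exists_eq_pow_of_radical_eq hP0 hArad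
  exact isOfFinOrder_iff_pow_eq_one.mpr
    ⟨k, hk, (ClassGroup.mk0_pow_eq_one_iff hP k).mpr hAprin⟩

theorem IsDedekindDomain.radicallyFinite_of_isMulTorsion [IsDedekindDomain R]
    (htor : IsMulTorsion (ClassGroup R)) : RadicallyFinite R := by
  intro P hP
  rcases eq_or_ne P ⊥ with rfl | hP0
  · refine ⟨radicallyPerfect_bot, ⊥, by simp [genHtRad_bot],
      fun B hB _ => by simpa [genHtRad_bot] using hB,
      fun C _ hC => (Set.finite_singleton ⊥).subset (by simpa using hC)⟩
  have hPnz : P ∈ (Ideal R)⁰ := mem_nonZeroDivisors_of_ne_zero hP0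
  have hht : idealHeight R P = 1 := (idealHeight_eq_height P).trans (P.height_eq_one_of_ne_bot hP0)
  set d := orderOf (ClassGroup.mk0 ⟨P, hPnz⟩)
  have hprin (k : ℕ) : (P ^ k).IsPrincipal ↔ d ∣ k := by
    rw [orderOf_dvd_iff_pow_eq_one, ClassGroup.mk0_pow_eq_one_iff]
  have hd : 0 < d := (htor _).orderOf_pos
  have hPd : (P ^ d).radical = P := by rw [Ideal.radical_pow _ hd.ne', hP.radical]
  have hPd_mem : P ^ d ∈ genHtRad P :=
    (mem_genHtRad_iff_of_idealHeight_eq_one hht).mpr ⟨(hprin d).mpr dvd_rfl, hPd⟩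
  obtain ⟨θ, hθ⟩ := ((hprin d).mpr dvd_rfl).principal
  refine ⟨radicallyPerfect_of_idealHeight_eq_one hht (θ := θ) ?_ ?_, P ^ d, hPd_mem,
    fun B hB hPB => ?_, fun C _ hC => (Ideal.finite_Icc_pow hP0 d).subset hC⟩
  · rwa [hP.radical, Ideal.radical_bot_of_isReduced]
  · rw [← Ideal.submodule_span_eq, ← hθ, hPd, hP.radical]
  · obtain ⟨hBprin, hBrad⟩ := (mem_genHtRad_iff_of_idealHeight_eq_one hht).mp hB
    obtain ⟨k, ⟨hk, hkd⟩, rfl⟩ :=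
      Ideal.exists_eq_pow_of_pow_le_of_le hP0 hPB (hBrad ▸ B.le_radical)
    rw [le_antisymm hkd (Nat.le_of_dvd hk ((hprin k).mp hBprin))]

end

theorem prufer_radicallyFinite_iff_general {R : Type*} [CommRing R] [IsDomain R]
    (hpr : IsPruferDomain R) :
    RadicallyFinite R ↔ IsDedekindDomain R ∧ Monoid.IsTorsion (ClassGroup R) := by
  constructor
  · intro h
    have := h.isNoetherianRing
    have hded := hpr.isDedekindDomain
    exact ⟨hded, ClassGroup.isMulTorsion_of_isOfFinOrder_mk0 fun _ hP hPp =>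
      h.isOfFinOrder_mk0 hP hPp⟩
  · rintro ⟨_, htor⟩
    exact IsDedekindDomain.radicallyFinite_of_isMulTorsion htor

/-- A Prüfer domain of finite Krull dimension is radically finite if and only if it is
a Dedekind domain with torsion ideal class group. -/
theorem prufer_radicallyFinite_iff {R : Type*} [CommRing R] [IsDomain R]
    (hpr : IsPruferDomain R) (hdim : ringKrullDim R < ⊤) :
    RadicallyFinite R ↔ IsDedekindDomain R ∧ Monoid.IsTorsion (ClassGroup R) :=
  prufer_radicallyFinite_iff_general hpr
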